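/- arXiv:0812.2049 — 8 statements merged into one kernel-verified Lean document; each statement's English description precedes it below -/
import Mathlib

section
/- Let X be a tuple-independent random subset of a finite set T with membership probabilities p : T → [0,1], and let W ⊆ T be nonempty. Consider the two-variable real polynomial F(x,y) = Π_{t∈W} ((1 − p(t)) + p(t)·x) · Π_{t∈T\W} ((1 − p(t)) + p(t)·y), and let c_{i,j} denote the coefficient of x^i y^j in F. Then the expected Jaccard distance from W to X satisfies E[d_J(W, X)] = Σ_{i=0}^{|W|} Σ_{j=0}^{|T\W|} c_{i,j} · (|W| − i + j)/(|W| + j). -/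
/-!
Write `S = A ∩ W` and `U = A \ W` for a subset `A ⊆ T`. The probability of `X = A` factors as the
probability that `X ∩ W = S` times the probability that `X \ W = U`, and `d_J(W, A)` depends only
on `|S|` and `|U|`. Expanding `F` by distributivity produces, for each such pair `(S, U)`, the
monomial `x^|S| y^|U|` with exactly this factored probability as coefficient, so pairing the
coefficients of `F` with `(|W| - i + j) / (|W| + j)` recovers the expectation.
-/

open Finset MvPolynomial

/-- The Jaccard distance `d_J(A,B) = |A Δ B| / |A ∪ B|` between two finite sets.
(When `A = B = ∅` both numerator and denominator are `0`, and Lean's convention `0 / 0 = 0`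
realizes the convention `d_J(∅,∅) = 0`.) -/
noncomputable def jaccardDist {T : Type*} [DecidableEq T] (A B : Finset T) : ℝ :=
  ((symmDiff A B).card : ℝ) / ((A ∪ B).card : ℝ)

section SubsetWeight

variable {α R : Type*} [DecidableEq α] [CommRing R]

/-- `Pr(X ∩ s = S)` for the random subset `X` with independent membership probabilities `q`. -/
def subsetWeight (q : α → R) (s S : Finset α) : R :=
  (∏ t ∈ S, q t) * ∏ t ∈ s \ S, (1 - q t)

theorem subsetWeight_union (q : α → R) {s s' S U : Finset α} (hs : Disjoint s s')
    (hS : S ⊆ s) (hU : U ⊆ s') :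
    subsetWeight q (s ∪ s') (S ∪ U) = subsetWeight q s S * subsetWeight q s' U := by
  have hSU : Disjoint S U := hs.mono hS hU
  have hsdiff : (s ∪ s') \ (S ∪ U) = (s \ S) ∪ (s' \ U) := by
    ext t
    grind [disjoint_left]
  rw [subsetWeight, subsetWeight, subsetWeight, hsdiff, prod_union hSU,
    prod_union (hs.mono sdiff_subset sdiff_subset)]
  ring

theorem prod_mul_prod_compl_one_sub_eq_subsetWeight [Fintype α] (q : α → R) (s A : Finset α) :
    (∏ t ∈ A, q t) * ∏ t ∈ Aᶜ, (1 - q t) =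
      subsetWeight q s (A ∩ s) * subsetWeight q sᶜ (A \ s) := by
  rw [← subsetWeight_union q disjoint_compl_right inter_subset_right
    (subset_compl_iff_disjoint_right.mpr sdiff_disjoint), union_compl, union_comm,
    sdiff_union_inter, subsetWeight, compl_eq_univ_sdiff]

theorem prod_C_one_sub_add_C_mul_X_eq_sum_powerset {σ : Type*} (q : α → R) (s : Finset α)
    (v : σ) :
    ∏ t ∈ s, (C (1 - q t) + C (q t) * X v) =
      ∑ S ∈ s.powerset, monomial (Finsupp.single v #S) (subsetWeight q s S) := by
  simp_rw [add_comm (C (1 - q _)), prod_add, subsetWeight]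
  refine sum_congr rfl fun S _ => ?_
  rw [prod_mul_distrib, prod_const, ← map_prod, ← map_prod, X_pow_eq_monomial, mul_right_comm,
    ← C_mul, C_mul_monomial, mul_one]

theorem prod_mul_prod_eq_sum_product_powerset (q : α → R) (s s' : Finset α) :
    (∏ t ∈ s, (C (1 - q t) + C (q t) * X (0 : Fin 2))) *
        ∏ t ∈ s', (C (1 - q t) + C (q t) * X (1 : Fin 2)) =
      ∑ P ∈ s.powerset ×ˢ s'.powerset,
        monomial (Finsupp.single 0 #P.1 + Finsupp.single 1 #P.2)
          (subsetWeight q s P.1 * subsetWeight q s' P.2) := by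
  simp_rw [prod_C_one_sub_add_C_mul_X_eq_sum_powerset, sum_mul_sum, sum_product, monomial_mul]

end SubsetWeight

theorem single_zero_add_single_one_inj {a b i j : ℕ} :
    Finsupp.single (0 : Fin 2) a + Finsupp.single 1 b = Finsupp.single 0 i + Finsupp.single 1 j ↔
      a = i ∧ b = j := by
  refine ⟨fun h => ?_, by rintro ⟨rfl, rfl⟩; rfl⟩
  have h0 := DFunLike.congr_fun h 0
  have h1 := DFunLike.congr_fun h 1
  simp only [Finsupp.add_apply, Finsupp.single_apply] at h0 h1
  simp_all

theorem sum_range_sum_range_coeff_sum_monomial {ι R : Type*} [CommSemiring R] (K : Finset ι)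
    (a b : ι → ℕ) (c : ι → R) (r : ℕ → ℕ → R) {m n : ℕ} (h : ∀ k ∈ K, a k ≤ m ∧ b k ≤ n) :
    ∑ i ∈ range (m + 1), ∑ j ∈ range (n + 1),
        coeff (Finsupp.single 0 i + Finsupp.single 1 j)
          (∑ k ∈ K, monomial (Finsupp.single (0 : Fin 2) (a k) + Finsupp.single 1 (b k)) (c k)) *
        r i j =
      ∑ k ∈ K, c k * r (a k) (b k) := by
  simp only [coeff_sum, coeff_monomial, single_zero_add_single_one_inj, sum_mul, ite_mul, zero_mul]
  rw [sum_congr rfl fun i _ => sum_comm, sum_comm]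
  refine sum_congr rfl fun k hk => ?_
  have ha : a k < m + 1 := Nat.lt_succ_of_le (h k hk).1
  have hb : b k < n + 1 := Nat.lt_succ_of_le (h k hk).2
  simp [ite_and, ha, hb]

theorem sum_univ_eq_sum_product_powerset {α M : Type*} [Fintype α] [DecidableEq α]
    [AddCommMonoid M] (s : Finset α) (g : Finset α → Finset α → M) :
    ∑ A, g (A ∩ s) (A \ s) = ∑ P ∈ s.powerset ×ˢ sᶜ.powerset, g P.1 P.2 := by
  refine sum_nbij' (fun A : Finset α => (A ∩ s, A \ s))
    (fun P : Finset α × Finset α => P.1 ∪ P.2) ?_ (by simp) ?_ ?_ (fun _ _ => rfl)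
  · intro A _
    simp only [mem_product, mem_powerset, subset_compl_iff_disjoint_right]
    exact ⟨inter_subset_right, sdiff_disjoint⟩
  · intro A _
    exact (union_comm _ _).trans (sdiff_union_inter A s)
  · rintro ⟨S, U⟩ hP
    simp only [mem_product, mem_powerset, subset_compl_iff_disjoint_right] at hP
    obtain ⟨hS, hU⟩ := hP
    rw [union_inter_distrib_right, union_sdiff_distrib, inter_eq_left.mpr hS,
      disjoint_iff_inter_eq_empty.mp hU, sdiff_eq_empty_iff_subset.mpr hS,
      sdiff_eq_self_of_disjoint hU, union_empty, empty_union]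

theorem jaccardDist_eq {α : Type*} [DecidableEq α] (W A : Finset α) :
    jaccardDist W A = (#W - #(A ∩ W) + #(A \ W)) / (#W + #(A \ W)) := by
  have hsymm : #(symmDiff W A) = #(W \ A) + #(A \ W) := by
    rw [symmDiff_def]
    exact card_union_of_disjoint disjoint_sdiff_sdiff
  have hinter : #(W \ A) + #(A ∩ W) = #W := inter_comm W A ▸ card_sdiff_add_card_inter W A
  have hunion : #(A \ W) + #W = #(W ∪ A) := union_comm A W ▸ card_sdiff_add_card A W
  rw [jaccardDist, hsymm, ← hunion, ← hinter]
  push_cast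
  ring

theorem stmt_3_general {T : Type*} [Fintype T] [DecidableEq T]
    (p : T → ℝ)
    (W : Finset T) :
    (∑ A : Finset T, ((∏ t ∈ A, p t) * ∏ t ∈ Aᶜ, (1 - p t)) * jaccardDist W A) =
      ∑ i ∈ Finset.range (W.card + 1), ∑ j ∈ Finset.range (Wᶜ.card + 1),
        MvPolynomial.coeff (Finsupp.single (0 : Fin 2) i + Finsupp.single (1 : Fin 2) j)
          ((∏ t ∈ W, (C (1 - p t) + C (p t) * X (0 : Fin 2))) *
            ∏ t ∈ Wᶜ, (C (1 - p t) + C (p t) * X (1 : Fin 2)))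
        * (((W.card : ℝ) - (i : ℝ) + (j : ℝ)) / ((W.card : ℝ) + (j : ℝ))) := by
  set r : ℕ → ℕ → ℝ := fun i j => ((#W : ℝ) - i + j) / (#W + j)
  calc _ = ∑ A, subsetWeight p W (A ∩ W) * subsetWeight p Wᶜ (A \ W) * r #(A ∩ W) #(A \ W) := by
        refine sum_congr rfl fun A _ => ?_
        rw [prod_mul_prod_compl_one_sub_eq_subsetWeight p W, jaccardDist_eq]
    _ = ∑ P ∈ W.powerset ×ˢ Wᶜ.powerset,
          subsetWeight p W P.1 * subsetWeight p Wᶜ P.2 * r #P.1 #P.2 :=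
        sum_univ_eq_sum_product_powerset W fun S U =>
          subsetWeight p W S * subsetWeight p Wᶜ U * r #S #U
    _ = _ := by
        rw [prod_mul_prod_eq_sum_product_powerset]
        refine (sum_range_sum_range_coeff_sum_monomial _ _ _ _ r fun P hP => ?_).symm
        rw [mem_product, mem_powerset, mem_powerset] at hP
        exact ⟨card_le_card hP.1, card_le_card hP.2⟩

/-- For a tuple-independent random subset `X` of a finite set `T` with membership
probabilities `p`, and a nonempty `W ⊆ T`, with
`F(x,y) = ∏_{t∈W} ((1−p t) + p t·x) · ∏_{t∉W} ((1−p t) + p t·y)` and `c_{i,j}` the coefficient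
of `x^i y^j` in `F`, the expected Jaccard distance satisfies
`E[d_J(W, X)] = Σ_{i=0}^{|W|} Σ_{j=0}^{|T\W|} c_{i,j} · (|W| − i + j)/(|W| + j)`. -/
theorem stmt_3 {T : Type*} [Fintype T] [DecidableEq T]
    (p : T → ℝ) (hp : ∀ t, 0 ≤ p t ∧ p t ≤ 1)
    (W : Finset T) (hW : W.Nonempty) :
    (∑ A : Finset T, ((∏ t ∈ A, p t) * ∏ t ∈ Aᶜ, (1 - p t)) * jaccardDist W A) =
      ∑ i ∈ Finset.range (W.card + 1), ∑ j ∈ Finset.range (Wᶜ.card + 1),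
        MvPolynomial.coeff (Finsupp.single (0 : Fin 2) i + Finsupp.single (1 : Fin 2) j)
          ((∏ t ∈ W, (C (1 - p t) + C (p t) * X (0 : Fin 2))) *
            ∏ t ∈ Wᶜ, (C (1 - p t) + C (p t) * X (1 : Fin 2)))
        * (((W.card : ℝ) - (i : ℝ) + (j : ℝ)) / ((W.card : ℝ) + (j : ℝ))) :=
  stmt_3_general p W
end

section
/- Let X be a tuple-independent random subset of a finite set T with membership probabilities p : T → [0,1]. If W* ⊆ T minimizes the expected Jaccard distance E[d_J(W, X)] over all subsets W ⊆ T, then for every t1 ∈ W* and every t2 ∈ T \ W*, one has p(t1) ≥ p(t2). -/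
open Finset

lemma jaccard_map_equiv {T : Type*} [DecidableEq T] (e : T ≃ T) (A B : Finset T) :
    jaccardDist (A.map e.toEmbedding) (B.map e.toEmbedding) = jaccardDist A B := by
  unfold jaccardDist
  have h2 : symmDiff (A.map e.toEmbedding) (B.map e.toEmbedding)
      = (symmDiff A B).map e.toEmbedding := by
    ext x; simp [Finset.mem_symmDiff, Finset.mem_map_equiv]
  have h1 : (A.map e.toEmbedding) ∪ (B.map e.toEmbedding) = (A ∪ B).map e.toEmbedding := by
    ext x; simp [Finset.mem_map_equiv]
  rw [h1, h2, Finset.card_map, Finset.card_map]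

lemma map_swap_eq {T : Type*} [DecidableEq T] {t1 t2 : T} (hne : t1 ≠ t2)
    {A : Finset T} (h1 : t1 ∈ A) (h2 : t2 ∉ A) :
    A.map (Equiv.swap t1 t2).toEmbedding = insert t2 (A.erase t1) := by
  ext x
  rw [Finset.mem_map_equiv, Equiv.symm_swap]
  by_cases hx1 : x = t1
  · subst hx1
    simp [Equiv.swap_apply_left, h2, hne]
  · by_cases hx2 : x = t2
    · subst hx2
      simp [Equiv.swap_apply_right, h1]
    · rw [Equiv.swap_apply_of_ne_of_ne hx1 hx2]
      simp [hx1, hx2]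

lemma map_swap_eq_self {T : Type*} [DecidableEq T] {t1 t2 : T} {A : Finset T}
    (h : t1 ∈ A ↔ t2 ∈ A) :
    A.map (Equiv.swap t1 t2).toEmbedding = A := by
  ext x
  rw [Finset.mem_map_equiv, Equiv.symm_swap]
  by_cases hx1 : x = t1
  · subst hx1; rw [Equiv.swap_apply_left]; exact h.symm
  · by_cases hx2 : x = t2
    · subst hx2; rw [Equiv.swap_apply_right]; exact h
    · rw [Equiv.swap_apply_of_ne_of_ne hx1 hx2]

lemma jaccard_swap_lt {T : Type*} [DecidableEq T] {t1 t2 : T} (hne : t1 ≠ t2)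
    {W A : Finset T} (hw1 : t1 ∈ W) (hw2 : t2 ∉ W) (ha1 : t1 ∈ A) (ha2 : t2 ∉ A) :
    jaccardDist W A < jaccardDist W (insert t2 (A.erase t1)) := by
  have hU : W ∪ insert t2 (A.erase t1) = insert t2 (W ∪ A) := by
    ext x
    simp only [Finset.mem_union, Finset.mem_insert, Finset.mem_erase]
    constructor
    · rintro (h | h | ⟨_, h⟩) <;> tauto
    · rintro (h | h | h)
      · tauto
      · tauto
      · by_cases hx : x = t1
        · subst hx; exact Or.inl hw1
        · tauto
  have hS : symmDiff W (insert t2 (A.erase t1)) = insert t1 (insert t2 (symmDiff W A)) := by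
    ext x
    simp only [Finset.mem_symmDiff, Finset.mem_insert, Finset.mem_erase]
    by_cases hx1 : x = t1
    · subst hx1; simp [hw1, hne, ha2]
    · by_cases hx2 : x = t2
      · subst hx2; simp [hw2, Ne.symm hne]
      · simp only [hx1, hx2, false_or, not_false_iff, true_and, or_false]
        tauto
  have hsub : symmDiff W A ⊆ W ∪ A := by
    intro x hx
    rw [Finset.mem_symmDiff] at hx
    rw [Finset.mem_union]; tauto
  set s := (symmDiff W A).card with hs
  set u := (W ∪ A).card with hu
  have hsu : s ≤ u := Finset.card_le_card hsub
  have hu1 : 1 ≤ u := Finset.card_pos.mpr ⟨t1, Finset.mem_union_left _ hw1⟩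
  have ht2u : t2 ∉ W ∪ A := by simp [hw2, ha2]
  have ht2s : t2 ∉ symmDiff W A := fun h => ht2u (hsub h)
  have ht1s : t1 ∉ insert t2 (symmDiff W A) := by
    simp [hne, Finset.mem_symmDiff, hw1, ha1]
  have hcU : (W ∪ insert t2 (A.erase t1)).card = u + 1 := by
    rw [hU, Finset.card_insert_of_notMem ht2u]
  have hcS : (symmDiff W (insert t2 (A.erase t1))).card = s + 2 := by
    rw [hS, Finset.card_insert_of_notMem ht1s, Finset.card_insert_of_notMem ht2s]
  unfold jaccardDist
  rw [hcU, hcS]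
  rw [div_lt_div_iff₀ (by positivity) (by positivity)]
  push_cast
  have c1 : (s : ℝ) ≤ (u : ℝ) := Nat.cast_le.mpr hsu
  have c2 : (1 : ℝ) ≤ (u : ℝ) := by exact_mod_cast hu1
  nlinarith

noncomputable def prW {T : Type*} [Fintype T] [DecidableEq T] (p : T → ℝ) (A : Finset T) : ℝ :=
  (∏ t ∈ A, p t) * ∏ t ∈ Aᶜ, (1 - p t)

/-- For a tuple-independent random subset `X` of a finite set `T` with membership
probabilities `p` (probability of the world `A` being `∏_{t∈A} p t · ∏_{t∉A} (1 - p t)`),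
if `W*` minimizes the expected Jaccard distance `E[d_J(W, X)]` over all `W ⊆ T`, then for every
`t1 ∈ W*` and every `t2 ∈ T \ W*` one has `p t1 ≥ p t2`. -/
theorem stmt_4 {T : Type*} [Fintype T] [DecidableEq T]
    (p : T → ℝ) (hp : ∀ t, 0 ≤ p t ∧ p t ≤ 1)
    (Wstar : Finset T)
    (hmin : ∀ W : Finset T,
      (∑ A : Finset T, ((∏ t ∈ A, p t) * ∏ t ∈ Aᶜ, (1 - p t)) * jaccardDist Wstar A)
        ≤ ∑ A : Finset T, ((∏ t ∈ A, p t) * ∏ t ∈ Aᶜ, (1 - p t)) * jaccardDist W A) :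
    ∀ t1 ∈ Wstar, ∀ t2 ∈ Wstarᶜ, p t2 ≤ p t1 := by
  intro t1 ht1 t2 ht2'
  by_contra hcon
  push_neg at hcon
  have ht2 : t2 ∉ Wstar := Finset.mem_compl.mp ht2'
  have hne : t1 ≠ t2 := by rintro rfl; exact ht2 ht1
  set e := Equiv.swap t1 t2 with he
  set σ : Finset T ≃ Finset T := e.finsetCongr with hσ
  have hσ_apply : ∀ A : Finset T, σ A = A.map e.toEmbedding := fun A => rfl
  have hσσ : ∀ A, σ (σ A) = A := by
    intro A
    have hsym : σ.symm = σ := by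
      rw [hσ, Equiv.finsetCongr_symm, he, Equiv.symm_swap]
    conv_lhs => rw [← hsym]
    exact σ.symm_apply_apply A
  set D : Finset T → ℝ := fun A => jaccardDist Wstar A with hD
  set g : Finset T → ℝ := fun A => (prW p A - prW p (σ A)) * D A with hg
  set Q : Finset T → ℝ :=
    fun A => (∏ t ∈ A.erase t1, p t) * ∏ t ∈ Aᶜ.erase t2, (1 - p t) with hQ
  -- factorization of probability difference
  have hfact : ∀ A : Finset T, t1 ∈ A → t2 ∉ A →
      prW p A - prW p (σ A) = (p t1 - p t2) * Q A := by
    intro A h1 h2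
    have hσA : σ A = insert t2 (A.erase t1) := by
      rw [hσ_apply, he]; exact map_swap_eq hne h1 h2
    have h2c : t2 ∈ Aᶜ := Finset.mem_compl.mpr h2
    have e1 : ∏ t ∈ A, p t = p t1 * ∏ t ∈ A.erase t1, p t :=
      (Finset.mul_prod_erase A p h1).symm
    have e2 : ∏ t ∈ Aᶜ, (1 - p t) = (1 - p t2) * ∏ t ∈ Aᶜ.erase t2, (1 - p t) :=
      (Finset.mul_prod_erase Aᶜ _ h2c).symm
    have ht2e : t2 ∉ A.erase t1 := fun h => h2 (Finset.mem_of_mem_erase h)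
    have e3 : ∏ t ∈ (insert t2 (A.erase t1)), p t = p t2 * ∏ t ∈ A.erase t1, p t :=
      Finset.prod_insert ht2e
    have hcompl : (insert t2 (A.erase t1))ᶜ = insert t1 (Aᶜ.erase t2) := by
      rw [Finset.compl_insert, Finset.compl_erase]
      exact Finset.erase_insert_of_ne hne
    have ht1e : t1 ∉ Aᶜ.erase t2 := fun h => (Finset.mem_compl.mp (Finset.mem_of_mem_erase h)) h1
    have e4 : ∏ t ∈ (insert t2 (A.erase t1))ᶜ, (1 - p t)
        = (1 - p t1) * ∏ t ∈ Aᶜ.erase t2, (1 - p t) := by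
      rw [hcompl, Finset.prod_insert ht1e]
    rw [hσA]
    unfold prW
    rw [e1, e2, e3, e4, hQ]
    ring
  have hQnn : ∀ A : Finset T, 0 ≤ Q A := by
    intro A
    apply mul_nonneg
    · exact Finset.prod_nonneg fun t _ => (hp t).1
    · exact Finset.prod_nonneg fun t _ => by linarith [(hp t).2]
  -- core inequality
  have core : ∀ A : Finset T, t1 ∈ A → t2 ∉ A → 0 ≤ g A + g (σ A) := by
    intro A h1 h2
    have hσA : σ A = insert t2 (A.erase t1) := by
      rw [hσ_apply, he]; exact map_swap_eq hne h1 h2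
    have hd : D A < D (σ A) := by
      rw [hD, hσA]; exact jaccard_swap_lt hne ht1 ht2 h1 h2
    have hc : g A + g (σ A) = (prW p A - prW p (σ A)) * (D A - D (σ A)) := by
      rw [hg]
      simp only
      rw [hσσ A]
      ring
    rw [hc, hfact A h1 h2]
    have hq := hQnn A
    have key : 0 ≤ (p t2 - p t1) * Q A * (D (σ A) - D A) :=
      mul_nonneg (mul_nonneg (by linarith) hq) (by linarith)
    have hre : (p t1 - p t2) * Q A * (D A - D (σ A))
        = (p t2 - p t1) * Q A * (D (σ A) - D A) := by ring
    rw [hre]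
    exact key
  -- membership transfer under σ
  have hmemσ : ∀ A : Finset T, t2 ∈ A → t1 ∉ A → (t1 ∈ σ A ∧ t2 ∉ σ A) := by
    intro A h2 h1
    have hσA : σ A = insert t1 (A.erase t2) := by
      rw [hσ_apply, he, Equiv.swap_comm]
      exact map_swap_eq (Ne.symm hne) h2 h1
    constructor
    · rw [hσA]; exact Finset.mem_insert_self _ _
    · rw [hσA]
      simp [Ne.symm hne]
  have hnonneg : ∀ A : Finset T, 0 ≤ g A + g (σ A) := by
    intro A
    by_cases h1 : t1 ∈ A <;> by_cases h2 : t2 ∈ A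
    · have hfix : σ A = A := by
        rw [hσ_apply, he]; exact map_swap_eq_self (iff_of_true h1 h2)
      rw [hg]; simp only [hfix]; simp
    · exact core A h1 h2
    · obtain ⟨hb1, hb2⟩ := hmemσ A h2 h1
      have := core (σ A) hb1 hb2
      rw [hσσ A] at this
      linarith
    · have hfix : σ A = A := by
        rw [hσ_apply, he]; exact map_swap_eq_self (iff_of_false h1 h2)
      rw [hg]; simp only [hfix]; simp
  -- strictly positive term
  set A0 : Finset T := insert t1 ((Finset.univ.filter fun t => p t = 1).erase t2) with hA0
  have hA01 : t1 ∈ A0 := Finset.mem_insert_self _ _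
  have hA02 : t2 ∉ A0 := by
    rw [hA0]
    simp [Ne.symm hne]
  have hQpos : 0 < Q A0 := by
    rw [hQ]
    apply mul_pos
    · apply Finset.prod_pos
      intro t ht
      have ht' : t ∈ A0 := Finset.mem_of_mem_erase ht
      have htne : t ≠ t1 := Finset.ne_of_mem_erase ht
      have : p t = 1 := by
        rw [hA0] at ht'
        rcases Finset.mem_insert.mp ht' with h | h
        · exact absurd h htne
        · exact (Finset.mem_filter.mp (Finset.mem_of_mem_erase h)).2
      rw [this]; norm_num
    · apply Finset.prod_pos
      intro t ht
      have ht' : t ∉ A0 := Finset.mem_compl.mp (Finset.mem_of_mem_erase ht)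
      have htne : t ≠ t2 := Finset.ne_of_mem_erase ht
      have hpt : p t ≠ 1 := by
        intro hp1
        apply ht'
        rw [hA0]
        apply Finset.mem_insert_of_mem
        exact Finset.mem_erase.mpr ⟨htne, Finset.mem_filter.mpr ⟨Finset.mem_univ t, hp1⟩⟩
      have := (hp t).2
      have : p t < 1 := lt_of_le_of_ne this hpt
      linarith
  have hpos0 : 0 < g A0 + g (σ A0) := by
    have hσA : σ A0 = insert t2 (A0.erase t1) := by
      rw [hσ_apply, he]; exact map_swap_eq hne hA01 hA02
    have hd : D A0 < D (σ A0) := by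
      rw [hD, hσA]; exact jaccard_swap_lt hne ht1 ht2 hA01 hA02
    have hc : g A0 + g (σ A0) = (prW p A0 - prW p (σ A0)) * (D A0 - D (σ A0)) := by
      rw [hg]
      simp only
      rw [hσσ A0]
      ring
    rw [hc, hfact A0 hA01 hA02]
    have : (p t1 - p t2) * Q A0 < 0 :=
      mul_neg_of_neg_of_pos (by linarith) hQpos
    exact mul_pos_of_neg_of_neg this (by linarith)
  -- sum manipulations
  have hmin' : ∀ W : Finset T,
      (∑ A : Finset T, prW p A * jaccardDist Wstar A)
        ≤ ∑ A : Finset T, prW p A * jaccardDist W A := hmin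
  have hR : ∑ A : Finset T, prW p A * jaccardDist (σ Wstar) A
      = ∑ A : Finset T, prW p (σ A) * D A := by
    rw [← Equiv.sum_comp σ (fun A => prW p A * jaccardDist (σ Wstar) A)]
    apply Finset.sum_congr rfl
    intro A _
    congr 1
    rw [hD]
    simp only
    rw [hσ_apply, hσ_apply]
    exact jaccard_map_equiv e Wstar A
  have hgle : ∑ A : Finset T, g A ≤ 0 := by
    have h1 := hmin' (σ Wstar)
    rw [hR] at h1
    have h2 : ∑ A : Finset T, g A
        = (∑ A : Finset T, prW p A * D A) - ∑ A : Finset T, prW p (σ A) * D A := by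
      rw [← Finset.sum_sub_distrib]
      apply Finset.sum_congr rfl
      intro A _
      rw [hg]
      ring
    rw [h2]
    simp only [hD] at h1 ⊢
    linarith
  have hswap : ∑ A : Finset T, g (σ A) = ∑ A : Finset T, g A := Equiv.sum_comp σ g
  have hpos : 0 < ∑ A : Finset T, (g A + g (σ A)) := by
    apply Finset.sum_pos' (fun A _ => hnonneg A)
    exact ⟨A0, Finset.mem_univ _, hpos0⟩
  rw [Finset.sum_add_distrib, hswap] at hpos
  linarith
end

section
/- Let X be a random subset of a finite set T, let k be a positive integer with k ≤ |T|, and let τ* ⊆ T be a set of k elements with the largest marginal probabilities, i.e., |τ*| = k and Pr(t ∈ X) ≥ Pr(t' ∈ X) whenever t ∈ τ* and t' ∈ T \ τ*. Then τ* minimizes the expected normalized symmetric difference: for every τ ⊆ T with |τ| = k, E[|τ* Δ X|/(2k)] ≤ E[|τ Δ X|/(2k)]. -/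
open Finset

lemma card_symmDiff_real {T : Type*} [DecidableEq T] (σ A : Finset T) :
    ((symmDiff σ A).card : ℝ) = σ.card + A.card - 2 * ((σ ∩ A).card : ℝ) := by
  have h1 := Finset.card_sdiff_add_card_inter σ A
  have h2 := Finset.card_sdiff_add_card_inter A σ
  have h3 : (symmDiff σ A).card = (σ \ A).card + (A \ σ).card := by
    rw [symmDiff_def]
    exact Finset.card_union_of_disjoint disjoint_sdiff_sdiff
  rw [Finset.inter_comm A σ] at h2
  push_cast [h3]
  have h1' : ((σ \ A).card : ℝ) + (σ ∩ A).card = σ.card := by exact_mod_cast h1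
  have h2' : ((A \ σ).card : ℝ) + (σ ∩ A).card = A.card := by exact_mod_cast h2
  linarith

/-- For a random subset `X` of a finite set `T` (finitely supported distribution
`μ` over subsets) and `k ≤ |T|`, if `τ*` is a set of `k` elements with the largest marginal
probabilities (i.e. `Pr(t ∈ X) ≥ Pr(t' ∈ X)` whenever `t ∈ τ*` and `t' ∈ T \ τ*`), then `τ*`
minimizes the expected normalized symmetric difference `E[|τ Δ X|/(2k)]` among all `τ ⊆ T`
with `|τ| = k`. -/
theorem stmt_6 {T : Type*} [Fintype T] [DecidableEq T]
    (μ : Finset T → ℝ) (hμ0 : ∀ A, 0 ≤ μ A) (hμ1 : ∑ A : Finset T, μ A = 1)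
    (k : ℕ) (hk : 0 < k) (hkT : k ≤ Fintype.card T)
    (τstar : Finset T) (hcard : τstar.card = k)
    (hτstar : ∀ t ∈ τstar, ∀ t' ∈ τstarᶜ,
      (∑ A : Finset T, if t' ∈ A then μ A else 0) ≤ ∑ A : Finset T, if t ∈ A then μ A else 0)
    (τ : Finset T) (hτ : τ.card = k) :
    ∑ A : Finset T, μ A * (((symmDiff τstar A).card : ℝ) / (2 * k)) ≤
      ∑ A : Finset T, μ A * (((symmDiff τ A).card : ℝ) / (2 * k)) := by
  set p : T → ℝ := fun t => ∑ A : Finset T, if t ∈ A then μ A else 0 with hp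
  have hpnn : ∀ t, 0 ≤ p t := fun t =>
    Finset.sum_nonneg fun A _ => by by_cases h : t ∈ A <;> simp [h, hμ0 A]
  -- key identity
  have key : ∀ σ : Finset T, ∑ A : Finset T, μ A * (((σ ∩ A).card : ℝ)) = ∑ t ∈ σ, p t := by
    intro σ
    have : ∀ A : Finset T, μ A * ((σ ∩ A).card : ℝ) = ∑ t ∈ σ, if t ∈ A then μ A else 0 := by
      intro A
      rw [Finset.sum_ite_mem, Finset.sum_const, nsmul_eq_mul, mul_comm]
    rw [Finset.sum_congr rfl fun A _ => this A, Finset.sum_comm]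
  have expand : ∀ σ : Finset T, σ.card = k →
      ∑ A : Finset T, μ A * ((symmDiff σ A).card : ℝ) =
      (∑ A : Finset T, μ A * ((k : ℝ) + A.card)) - 2 * ∑ t ∈ σ, p t := by
    intro σ hσ
    rw [← key σ, Finset.mul_sum, ← Finset.sum_sub_distrib]
    refine Finset.sum_congr rfl fun A _ => ?_
    rw [card_symmDiff_real, hσ]
    ring
  -- reduce to sum of marginals
  have main : ∑ t ∈ τ, p t ≤ ∑ t ∈ τstar, p t := by
    have hsplit1 := Finset.sum_inter_add_sum_sdiff τ τstar p
    have hsplit2 := Finset.sum_inter_add_sum_sdiff τstar τ p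
    rw [Finset.inter_comm τstar τ] at hsplit2
    have hcards : (τ \ τstar).card = (τstar \ τ).card := by
      have a1 := Finset.card_sdiff_add_card_inter τ τstar
      have a2 := Finset.card_sdiff_add_card_inter τstar τ
      rw [Finset.inter_comm τstar τ] at a2
      omega
    have hdiff : ∑ t ∈ τ \ τstar, p t ≤ ∑ t ∈ τstar \ τ, p t := by
      rcases (τ \ τstar).eq_empty_or_nonempty with he | hne
      · rw [he]
        simp only [Finset.sum_empty]
        exact Finset.sum_nonneg fun t _ => hpnn t
      · obtain ⟨t0, ht0, hmax⟩ := Finset.exists_max_image (τ \ τstar) p hne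
        have ht0c : t0 ∈ τstarᶜ := by
          simp only [Finset.mem_compl]
          exact (Finset.mem_sdiff.mp ht0).2
        calc ∑ t ∈ τ \ τstar, p t ≤ (τ \ τstar).card • p t0 :=
              Finset.sum_le_card_nsmul _ _ _ fun t ht => hmax t ht
          _ = (τstar \ τ).card • p t0 := by rw [hcards]
          _ ≤ ∑ t ∈ τstar \ τ, p t := by
              refine Finset.card_nsmul_le_sum _ _ _ fun t ht => ?_
              exact hτstar t (Finset.mem_sdiff.mp ht).1 t0 ht0c
    linarith
  have h2k : (0 : ℝ) < 2 * k := by positivity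
  simp only [← mul_div_assoc, ← Finset.sum_div]
  refine div_le_div_of_nonneg_right ?_ h2k.le
  rw [expand τstar hcard, expand τ hτ]
  linarith
end

section
/- Let r be a random top-k ranking over a finite set T, and let τ : {1,...,k} → T be injective. For 1 ≤ i ≤ k write τ^i = {τ(1),...,τ(i)} and S_i = {t ∈ T : r(t) ≤ i}, and define the intersection distance d_I(τ, r) = (1/k) · Σ_{i=1}^k |τ^i Δ S_i|/(2i). Then E[d_I(τ, r)] = (1/k)·Σ_{i=1}^k (1/(2i))·( i + Σ_{t∈T} Pr(r(t) ≤ i) ) − (1/k)·Σ_{j=1}^k Σ_{i=j}^k (1/i)·Pr(r(τ(j)) ≤ i). In particular, minimizing E[d_I(τ, r)] over injective τ is equivalent to maximizing A(τ) = Σ_{j=1}^k Σ_{i=j}^k (1/i)·Pr(r(τ(j)) ≤ i). -/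
open Finset

lemma aux_card {T : Type*} [Fintype T] [DecidableEq T] {Ω : Type*} [Fintype Ω]
    (r : Ω → T → ℕ∞) (k : ℕ) (σ : Fin k → T) (hσ : Function.Injective σ)
    (ω : Ω) (i : ℕ) (hi : i ∈ Finset.Icc 1 k) :
    ((symmDiff ((Finset.univ.filter fun a : Fin k => (a : ℕ) < i).image σ)
        (Finset.univ.filter fun t => r ω t ≤ (i : ℕ∞))).card : ℝ) / (2 * (i : ℝ)) =
    (1/(2*(i:ℝ))) * ((i:ℝ) + ∑ t : T, if r ω t ≤ (i:ℕ∞) then (1:ℝ) else 0)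
      - ∑ a : Fin k, (if (a:ℕ) + 1 ≤ i ∧ r ω (σ a) ≤ (i:ℕ∞) then (1/(i:ℝ)) else 0) := by
  simp only [Finset.mem_Icc] at hi
  set F := Finset.univ.filter fun a : Fin k => (a : ℕ) < i with hF
  set A := F.image σ with hA
  set B := Finset.univ.filter fun t => r ω t ≤ (i : ℕ∞) with hB
  have hFcard : F.card = i := by
    rw [hF, Finset.card_filter, Fin.sum_univ_eq_sum_range (fun j => if j < i then 1 else 0),
      ← Finset.card_filter]
    have : (range k).filter (· < i) = range i := by
      ext j; simp [Finset.mem_range]; omega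
    rw [this, Finset.card_range]
  have hAcard : A.card = i := by rw [hA, Finset.card_image_of_injective _ hσ, hFcard]
  have hABcard : (A ∩ B).card =
      (Finset.univ.filter fun a : Fin k => (a : ℕ) + 1 ≤ i ∧ r ω (σ a) ≤ (i:ℕ∞)).card := by
    have h1 : A ∩ B = A.filter fun t => r ω t ≤ (i : ℕ∞) := by
      rw [Finset.inter_comm, hB, Finset.filter_inter, Finset.univ_inter]
    rw [h1, hA, Finset.filter_image, Finset.card_image_of_injective _ hσ, hF,
      Finset.filter_filter]
    apply congrArg
    apply Finset.filter_congr
    intro a _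
    rw [Nat.lt_iff_add_one_le]
  have hsd : ((symmDiff A B).card : ℝ) = (i:ℝ) + (B.card:ℝ) - 2 * ((A ∩ B).card:ℝ) := by
    have e1 : (symmDiff A B).card + (A ∩ B).card = (A ∪ B).card := by
      rw [symmDiff_eq_sup_sdiff_inf, sup_eq_union, inf_eq_inter]
      exact Finset.card_sdiff_add_card_eq_card (Finset.inter_subset_union)
    have e2 : (A ∩ B).card + (A ∪ B).card = A.card + B.card :=
      Finset.card_inter_add_card_union _ _
    have c1 := congrArg (Nat.cast (R := ℝ)) e1
    have c2 := congrArg (Nat.cast (R := ℝ)) e2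
    rw [hAcard] at c2
    push_cast at c1 c2
    linarith
  have hBcard : (B.card : ℝ) = ∑ t : T, if r ω t ≤ (i:ℕ∞) then (1:ℝ) else 0 := by
    rw [hB, Finset.card_filter]; push_cast; simp
  have hm : ((A ∩ B).card : ℝ) =
      ∑ a : Fin k, (if (a:ℕ) + 1 ≤ i ∧ r ω (σ a) ≤ (i:ℕ∞) then (1:ℝ) else 0) := by
    rw [hABcard, Finset.card_filter]; push_cast; simp
  have hsum : ∑ a : Fin k, (if (a:ℕ) + 1 ≤ i ∧ r ω (σ a) ≤ (i:ℕ∞) then (1/(i:ℝ)) else 0)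
      = (1/(i:ℝ)) * ∑ a : Fin k, (if (a:ℕ) + 1 ≤ i ∧ r ω (σ a) ≤ (i:ℕ∞) then (1:ℝ) else 0) := by
    rw [Finset.mul_sum]
    exact Finset.sum_congr rfl fun a _ => by split <;> ring
  rw [hsum, hsd, hBcard, hm]
  have hi0 : (i:ℝ) ≠ 0 := Nat.cast_ne_zero.mpr (by omega)
  field_simp


/-- The expected intersection-metric distance `E[d_I(τ, r)]` of the top-k list
`τ : Fin k → T` to the random top-k ranking `r` over the finitely supported probability
space `(Ω, μ)`, where `d_I(τ, r) = (1/k) Σ_{i=1}^k |τ^i Δ S_i|/(2i)`,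
`τ^i = {τ(1),…,τ(i)}` and `S_i = {t : r t ≤ i}`. -/
noncomputable def expIntersectionDist {T : Type*} [Fintype T] [DecidableEq T]
    {Ω : Type*} [Fintype Ω] (μ : Ω → ℝ) (r : Ω → T → ℕ∞) (k : ℕ) (τ : Fin k → T) : ℝ :=
  ∑ ω : Ω, μ ω * ((1 / (k : ℝ)) * ∑ i ∈ Finset.Icc 1 k,
    ((symmDiff ((Finset.univ.filter fun a : Fin k => (a : ℕ) < i).image τ)
        (Finset.univ.filter fun t => r ω t ≤ (i : ℕ∞))).card : ℝ) / (2 * (i : ℝ)))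

/-- The objective `A(τ) = Σ_{j=1}^k Σ_{i=j}^k (1/i)·Pr(r(τ(j)) ≤ i)` (with the position `j`
of the top-k list indexed by `a : Fin k`, `j = a + 1`). -/
noncomputable def Aobj {T : Type*} [Fintype T] [DecidableEq T]
    {Ω : Type*} [Fintype Ω] (μ : Ω → ℝ) (r : Ω → T → ℕ∞) (k : ℕ) (τ : Fin k → T) : ℝ :=
  ∑ a : Fin k, ∑ i ∈ Finset.Icc ((a : ℕ) + 1) k,
    (1 / (i : ℝ)) * ∑ ω : Ω, if r ω (τ a) ≤ (i : ℕ∞) then μ ω else 0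

lemma aux_key {T : Type*} [Fintype T] [DecidableEq T] {Ω : Type*} [Fintype Ω]
    (μ : Ω → ℝ) (hμ1 : ∑ ω : Ω, μ ω = 1)
    (r : Ω → T → ℕ∞) (k : ℕ)
    (σ : Fin k → T) (hσ : Function.Injective σ) :
    expIntersectionDist μ r k σ =
        (1 / (k : ℝ)) * (∑ i ∈ Finset.Icc 1 k, (1 / (2 * (i : ℝ))) *
            ((i : ℝ) + ∑ t : T, ∑ ω : Ω, if r ω t ≤ (i : ℕ∞) then μ ω else 0))
          - (1 / (k : ℝ)) * Aobj μ r k σ := by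
  unfold expIntersectionDist
  have step1 : ∀ ω : Ω,
      μ ω * ((1 / (k : ℝ)) * ∑ i ∈ Finset.Icc 1 k,
        ((symmDiff ((Finset.univ.filter fun a : Fin k => (a : ℕ) < i).image σ)
          (Finset.univ.filter fun t => r ω t ≤ (i : ℕ∞))).card : ℝ) / (2 * (i : ℝ)))
      = (1 / (k : ℝ)) * ∑ i ∈ Finset.Icc 1 k,
          (μ ω * ((1/(2*(i:ℝ))) * ((i:ℝ) + ∑ t : T, if r ω t ≤ (i:ℕ∞) then (1:ℝ) else 0))
           - ∑ a : Fin k, (if (a:ℕ) + 1 ≤ i ∧ r ω (σ a) ≤ (i:ℕ∞) then μ ω * (1/(i:ℝ)) else 0)) := by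
    intro ω
    rw [Finset.sum_congr rfl (fun i hi => aux_card r k σ hσ ω i hi)]
    rw [← mul_assoc, mul_comm (μ ω) (1/(k:ℝ)), mul_assoc, Finset.mul_sum]
    congr 1
    apply Finset.sum_congr rfl
    intro i _
    rw [mul_sub, Finset.mul_sum]
    congr 1
    apply Finset.sum_congr rfl
    intro a _
    split <;> ring
  rw [Finset.sum_congr rfl fun ω _ => step1 ω]
  simp only [← Finset.mul_sum]
  rw [Finset.sum_comm]
  simp only [Finset.sum_sub_distrib]
  rw [mul_sub]
  have E1 : ∀ i ∈ Finset.Icc 1 k,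
      (∑ ω : Ω, μ ω * (1/(2*(i:ℝ)) * ((i:ℝ) + ∑ t : T, if r ω t ≤ (i:ℕ∞) then (1:ℝ) else 0)))
      = 1/(2*(i:ℝ)) * ((i:ℝ) + ∑ t : T, ∑ ω : Ω, if r ω t ≤ (i:ℕ∞) then μ ω else 0) := by
    intro i _
    have hpt : ∀ ω : Ω,
        μ ω * (1/(2*(i:ℝ)) * ((i:ℝ) + ∑ t : T, if r ω t ≤ (i:ℕ∞) then (1:ℝ) else 0))
        = 1/(2*(i:ℝ)) * (μ ω * (i:ℝ))
          + 1/(2*(i:ℝ)) * ∑ t : T, (if r ω t ≤ (i:ℕ∞) then μ ω else 0) := by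
      intro ω
      have : (∑ t : T, if r ω t ≤ (i:ℕ∞) then μ ω else 0)
          = μ ω * ∑ t : T, (if r ω t ≤ (i:ℕ∞) then (1:ℝ) else 0) := by
        rw [Finset.mul_sum]
        exact Finset.sum_congr rfl fun t _ => by split <;> ring
      rw [this]; ring
    rw [Finset.sum_congr rfl fun ω _ => hpt ω, Finset.sum_add_distrib,
      ← Finset.mul_sum, ← Finset.mul_sum, ← Finset.sum_mul, hμ1, one_mul,
      Finset.sum_comm]
    ring
  rw [Finset.sum_congr rfl E1]
  congr 1
  have E2 : (∑ i ∈ Finset.Icc 1 k, ∑ ω : Ω, ∑ a : Fin k,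
        if (a:ℕ) + 1 ≤ i ∧ r ω (σ a) ≤ (i:ℕ∞) then μ ω * (1/(i:ℝ)) else 0)
      = Aobj μ r k σ := by
    rw [Finset.sum_congr rfl fun i (_ : i ∈ Finset.Icc 1 k) =>
      Finset.sum_comm (s := Finset.univ (α := Ω)) (t := Finset.univ (α := Fin k))
        (f := fun ω a => if (a:ℕ) + 1 ≤ i ∧ r ω (σ a) ≤ (i:ℕ∞) then μ ω * (1/(i:ℝ)) else 0)]
    rw [Finset.sum_comm]
    unfold Aobj
    apply Finset.sum_congr rfl
    intro a _
    have hfil : Finset.Icc ((a:ℕ) + 1) k = (Finset.Icc 1 k).filter (fun i => (a:ℕ) + 1 ≤ i) := by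
      ext i
      simp only [Finset.mem_Icc, Finset.mem_filter]
      omega
    rw [hfil, Finset.sum_filter]
    apply Finset.sum_congr rfl
    intro i _
    by_cases hP : (a:ℕ) + 1 ≤ i
    · simp only [hP, true_and, if_true]
      rw [Finset.mul_sum]
      exact Finset.sum_congr rfl fun ω _ => by split <;> ring
    · simp [hP]
  rw [E2]

/-- For a random top-k ranking `r` over a finite set `T` and an injective
`τ : Fin k → T`,
`E[d_I(τ, r)] = (1/k)·Σ_{i=1}^k (1/(2i))·(i + Σ_{t∈T} Pr(r(t) ≤ i)) − (1/k)·A(τ)`,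
where `A(τ) = Σ_{j=1}^k Σ_{i=j}^k (1/i)·Pr(r(τ(j)) ≤ i)`.  In particular, minimizing
`E[d_I(·, r)]` over injective top-k lists is equivalent to maximizing `A(·)`. -/
theorem stmt_7 {T : Type*} [Fintype T] [DecidableEq T]
    {Ω : Type*} [Fintype Ω]
    (μ : Ω → ℝ) (hμ0 : ∀ ω, 0 ≤ μ ω) (hμ1 : ∑ ω : Ω, μ ω = 1)
    (r : Ω → T → ℕ∞) (k : ℕ) (hk : 0 < k)
    (τ : Fin k → T) (hτ : Function.Injective τ) :
    expIntersectionDist μ r k τ =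
        (1 / (k : ℝ)) * (∑ i ∈ Finset.Icc 1 k, (1 / (2 * (i : ℝ))) *
            ((i : ℝ) + ∑ t : T, ∑ ω : Ω, if r ω t ≤ (i : ℕ∞) then μ ω else 0))
          - (1 / (k : ℝ)) * Aobj μ r k τ
    ∧ ((∀ τ' : Fin k → T, Function.Injective τ' →
          expIntersectionDist μ r k τ ≤ expIntersectionDist μ r k τ')
        ↔ (∀ τ' : Fin k → T, Function.Injective τ' →
          Aobj μ r k τ' ≤ Aobj μ r k τ)) := by
  have hk' : (0:ℝ) < 1/(k:ℝ) := by
    have : (0:ℝ) < (k:ℝ) := by exact_mod_cast hk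
    positivity
  refine ⟨aux_key μ hμ1 r k τ hτ, ?_⟩
  constructor
  · intro h τ' hτ'
    have h2 := h τ' hτ'
    rw [aux_key μ hμ1 r k τ hτ, aux_key μ hμ1 r k τ' hτ'] at h2
    nlinarith
  · intro h τ' hτ'
    have h2 := h τ' hτ'
    rw [aux_key μ hμ1 r k τ hτ, aux_key μ hμ1 r k τ' hτ']
    nlinarith
end

section
/- Let T be a finite set with |T| ≥ k and let P : T × {1,...,k} → ℝ satisfy 0 ≤ P(t,i) for all t, i and P(t,i) ≤ P(t,i+1) for all t and 1 ≤ i < k. Define Υ_H(t) = Σ_{i=1}^k P(t,i)/i and, for an injective map τ : {1,...,k} → T, define A(τ) = Σ_{j=1}^k Σ_{i=j}^k P(τ(j), i)/i. Let τ_H : {1,...,k} → T be an injective map listing k elements with the largest Υ_H-values in nonincreasing order, i.e., Υ_H(τ_H(1)) ≥ Υ_H(τ_H(2)) ≥ ... ≥ Υ_H(τ_H(k)), and Υ_H(τ_H(k)) ≥ Υ_H(t) for every t ∈ T not in the range of τ_H. Then for every injective τ : {1,...,k} → T, A(τ_H) ≥ A(τ)/H_k, where H_k = Σ_{i=1}^k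 1/i. -/
/-!
Both `A(τ) / H_k` and `A(τ_H)` are compared with `S = Σ_j Υ_H(τ_H(j))`. Dropping the
lower part of each inner sum gives `A(τ) ≤ Σ_j Υ_H(τ(j))`, and this is at most `S` because
`τ_H` selects the `k` largest values of `Υ_H`. On the other side, write
`w_j = Σ_{i=j}^k 1/i`; these weights sum to `k` and decrease in `j`, as does `Υ_H ∘ τ_H`,
so Chebyshev's sum inequality gives `S ≤ Σ_j Υ_H(τ_H(j)) w_j`. Finally, since `P(t, ·)` is
nondecreasing, the `1/i`-weighted mean of `P(t, i)` over the tail `j ≤ i ≤ k` is at least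
its mean over `1 ≤ i ≤ k`, that is `Υ_H(t) w_j ≤ H_k Σ_{i=j}^k P(t,i)/i`.
-/

open Finset

section WeightedMean

variable {ι : Type*} {s t : Finset ι} {w f : ι → ℝ}

theorem sum_mul_sum_le_of_forall_le (hws : ∀ i ∈ s, 0 ≤ w i) (hwt : ∀ j ∈ t, 0 ≤ w j)
    (hf : ∀ i ∈ s, ∀ j ∈ t, f i ≤ f j) :
    (∑ i ∈ s, w i * f i) * ∑ j ∈ t, w j ≤ (∑ j ∈ t, w j * f j) * ∑ i ∈ s, w i := by
  rw [sum_mul_sum, sum_mul_sum, sum_comm (s := t)]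
  refine sum_le_sum fun i hi => sum_le_sum fun j hj => ?_
  calc w i * f i * w j = w i * w j * f i := by ring
    _ ≤ w i * w j * f j := by
      gcongr
      · exact mul_nonneg (hws i hi) (hwt j hj)
      · exact hf i hi j hj
    _ = w j * f j * w i := by ring

theorem sum_mul_sum_subset_le_of_forall_le [DecidableEq ι] (hts : t ⊆ s) (hw : ∀ i ∈ s, 0 ≤ w i)
    (hf : ∀ i ∈ s \ t, ∀ j ∈ t, f i ≤ f j) :
    (∑ i ∈ s, w i * f i) * ∑ j ∈ t, w j ≤ (∑ j ∈ t, w j * f j) * ∑ i ∈ s, w i := by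
  have hcross := sum_mul_sum_le_of_forall_le (fun i hi => hw i (mem_sdiff.1 hi).1)
    (fun j hj => hw j (hts hj)) hf
  rw [← sum_sdiff hts, ← sum_sdiff hts (f := w)]
  linarith

end WeightedMean

section TopSelection

variable {T M : Type*} [AddCommMonoid M] [PartialOrder M] [IsOrderedAddMonoid M]

theorem sum_le_sum_of_card_eq_of_threshold [DecidableEq T] {s u : Finset T} {f : T → M}
    (m : M) (hcard : #u = #s) (hs : ∀ x ∈ s, m ≤ f x) (hm : ∀ x ∉ s, f x ≤ m) :
    ∑ x ∈ u, f x ≤ ∑ x ∈ s, f x := by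
  have hcard' : #(u \ s) = #(s \ u) := by
    have := card_sdiff_add_card_inter u s
    have := card_sdiff_add_card_inter s u
    rw [inter_comm] at this
    omega
  rw [← sum_inter_add_sum_sdiff u s, ← sum_inter_add_sum_sdiff s u, inter_comm s u]
  refine add_le_add_right ?_ _
  calc ∑ x ∈ u \ s, f x ≤ #(u \ s) • m :=
        sum_le_card_nsmul _ _ _ fun x hx => hm x (mem_sdiff.1 hx).2
    _ = #(s \ u) • m := by rw [hcard']
    _ ≤ ∑ x ∈ s \ u, f x := card_nsmul_le_sum _ _ _ fun x hx => hs x (mem_sdiff.1 hx).1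

theorem sum_comp_le_sum_comp_of_threshold {ι : Type*} [Fintype ι] {σ τ : ι → T} {f : T → M}
    (hσ : Function.Injective σ) (hτ : Function.Injective τ) (m : M)
    (hσm : ∀ a, m ≤ f (σ a)) (hm : ∀ x ∉ Set.range σ, f x ≤ m) :
    ∑ a, f (τ a) ≤ ∑ a, f (σ a) := by
  classical
  rw [← sum_image fun a _ b _ h => hτ h, ← sum_image fun a _ b _ h => hσ h]
  refine sum_le_sum_of_card_eq_of_threshold m ?_ ?_ ?_
  · rw [card_image_of_injective _ hτ, card_image_of_injective _ hσ]
  · simpa using hσm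
  · simpa using hm

end TopSelection

theorem sum_range_sum_Icc_add_one {M : Type*} [AddCommMonoid M] (g : ℕ → M) (k : ℕ) :
    ∑ a ∈ range k, ∑ i ∈ Icc (a + 1) k, g i = ∑ i ∈ Icc 1 k, i • g i := by
  rw [sum_comm' (t' := Icc 1 k) (s' := range)]
  · simp
  · intro a i
    simp only [mem_range, mem_Icc]
    omega

theorem sum_tail_harmonic_eq (k : ℕ) :
    ∑ a : Fin k, ∑ i ∈ Icc ((a : ℕ) + 1) k, (1 : ℝ) / i = k := by
  rw [Fin.sum_univ_eq_sum_range (fun a => ∑ i ∈ Icc (a + 1) k, (1 : ℝ) / i),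
    sum_range_sum_Icc_add_one]
  have hterm : ∀ i ∈ Icc 1 k, i • ((1 : ℝ) / i) = 1 := by
    intro i hi
    have : (i : ℝ) ≠ 0 := Nat.cast_ne_zero.2 (by have := (mem_Icc.1 hi).1; omega)
    rw [nsmul_eq_mul]
    field_simp
  rw [sum_congr rfl hterm]
  simp

theorem antitone_tail_harmonic (k : ℕ) :
    Antitone fun a : Fin k => ∑ i ∈ Icc ((a : ℕ) + 1) k, (1 : ℝ) / i := by
  intro a b hab
  refine sum_le_sum_of_subset_of_nonneg (Icc_subset_Icc_left (by simpa using hab)) ?_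
  intros
  positivity

theorem sum_le_sum_mul_tail_harmonic {k : ℕ} (f : Fin k → ℝ) (hf : Antitone f) :
    ∑ a, f a ≤ ∑ a, f a * ∑ i ∈ Icc ((a : ℕ) + 1) k, (1 : ℝ) / i := by
  rcases Nat.eq_zero_or_pos k with rfl | hk
  · simp
  have hcheb := (hf.monovary (antitone_tail_harmonic k)).sum_mul_sum_le_card_mul_sum
  rw [sum_tail_harmonic_eq, Fintype.card_fin, mul_comm] at hcheb
  exact le_of_mul_le_mul_left hcheb (by exact_mod_cast hk)

theorem sum_div_mul_tail_harmonic_le {k : ℕ} {f : ℕ → ℝ} (hf : MonotoneOn f (Set.Icc 1 k))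
    (a : ℕ) :
    (∑ i ∈ Icc 1 k, f i / i) * ∑ i ∈ Icc (a + 1) k, (1 : ℝ) / i ≤
      (∑ i ∈ Icc (a + 1) k, f i / i) * ∑ i ∈ Icc 1 k, (1 : ℝ) / i := by
  simpa only [one_div_mul_eq_div] using
    sum_mul_sum_subset_le_of_forall_le (w := fun i : ℕ => (1 : ℝ) / i) (f := f)
      (Icc_subset_Icc_left (Nat.le_add_left 1 a)) (fun i _ => by positivity) fun i hi j hj => by
        simp only [mem_sdiff, mem_Icc] at hi hj
        exact hf hi.1 ⟨by omega, hj.2⟩ (by omega)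

/-- Let `T` be finite with `|T| ≥ k`, and `P : T × {1,…,k} → ℝ` nonnegative and
nondecreasing in the second argument. With `Υ_H(t) = Σ_{i=1}^k P(t,i)/i` and
`A(τ) = Σ_{j=1}^k Σ_{i=j}^k P(τ(j),i)/i` (positions indexed by `a : Fin k`, `j = a+1`),
if `τ_H` lists `k` elements with the largest `Υ_H`-values in nonincreasing order, then for
every injective `τ`, `A(τ_H) ≥ A(τ)/H_k` where `H_k = Σ_{i=1}^k 1/i`. -/
theorem stmt_8 {T : Type*} [Fintype T]
    (k : ℕ) (hk : 0 < k)
    (P : T → ℕ → ℝ)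
    (hP0 : ∀ t, ∀ i ∈ Finset.Icc 1 k, 0 ≤ P t i)
    (hPmono : ∀ t, ∀ i, 1 ≤ i → i < k → P t i ≤ P t (i + 1))
    (τH : Fin k → T) (hτH : Function.Injective τH)
    (hsorted : ∀ a b : Fin k, a ≤ b →
      (∑ i ∈ Finset.Icc 1 k, P (τH b) i / (i : ℝ)) ≤
        ∑ i ∈ Finset.Icc 1 k, P (τH a) i / (i : ℝ))
    (hlast : ∀ t : T, t ∉ Set.range τH →
      (∑ i ∈ Finset.Icc 1 k, P t i / (i : ℝ)) ≤
        ∑ i ∈ Finset.Icc 1 k, P (τH ⟨k - 1, by omega⟩) i / (i : ℝ))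
    (τ : Fin k → T) (hτ : Function.Injective τ) :
    (∑ a : Fin k, ∑ i ∈ Finset.Icc ((a : ℕ) + 1) k, P (τ a) i / (i : ℝ)) /
        (∑ i ∈ Finset.Icc 1 k, (1 : ℝ) / (i : ℝ))
      ≤ ∑ a : Fin k, ∑ i ∈ Finset.Icc ((a : ℕ) + 1) k, P (τH a) i / (i : ℝ) := by
  set Υ : T → ℝ := fun t => ∑ i ∈ Icc 1 k, P t i / (i : ℝ)
  have hmono (t : T) : MonotoneOn (P t) (Set.Icc 1 k) :=
    monotoneOn_of_le_add_one Set.ordConnected_Icc fun i _ hi hi' =>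
      hPmono t i hi.1 (Nat.lt_of_succ_le hi'.2)
  have hHk : 0 < ∑ i ∈ Icc 1 k, (1 : ℝ) / i :=
    sum_pos (fun i hi => by have := (mem_Icc.1 hi).1; positivity) ⟨1, mem_Icc.2 ⟨le_rfl, hk⟩⟩
  rw [div_le_iff₀ hHk]
  calc ∑ a : Fin k, ∑ i ∈ Icc ((a : ℕ) + 1) k, P (τ a) i / (i : ℝ)
      ≤ ∑ a, Υ (τ a) := by
        gcongr with a
        exact sum_le_sum_of_subset_of_nonneg (Icc_subset_Icc_left (by omega))
          fun i hi _ => div_nonneg (hP0 _ i hi) i.cast_nonneg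
    _ ≤ ∑ a, Υ (τH a) := sum_comp_le_sum_comp_of_threshold hτH hτ _
        (fun a => hsorted _ _ (Fin.le_def.2 (Nat.le_sub_one_of_lt a.isLt))) hlast
    _ ≤ ∑ a, Υ (τH a) * ∑ i ∈ Icc ((a : ℕ) + 1) k, (1 : ℝ) / i :=
        sum_le_sum_mul_tail_harmonic _ hsorted
    _ ≤ _ := by
        rw [sum_mul]
        exact sum_le_sum fun a _ => sum_div_mul_tail_harmonic_le (hmono (τH a)) a
end

section
/- Let k ≥ 1 and let P_1 ≤ P_2 ≤ ... ≤ P_k be nonnegative real numbers. Then for every j with 1 ≤ j ≤ k: Σ_{i=j}^k P_i/i ≥ ((H_k − H_{j−1})/H_k) · Σ_{i=1}^k P_i/i, where H_m = Σ_{i=1}^m 1/i and H_0 = 0. -/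
open Finset

/-!
The tail `Icc j k` carries the weights `1/i` where `P i ≥ P j`, and the head `Icc 1 (j-1)` those
where `P i ≤ P j`. Comparing both weighted sums with `P j` gives
`B · head ≤ A · B · P j ≤ A · tail`, where `A = H_{j-1}` and `B = H_k - H_{j-1}` are the total
weights of head and tail; this cross inequality is the claim after clearing the denominator
`H_k = A + B`.
-/

lemma Nat.monotoneOn_Icc_of_le_succ {α : Type*} [Preorder α] {f : ℕ → α} {m n : ℕ}
    (hf : ∀ i, m ≤ i → i < n → f i ≤ f (i + 1)) : MonotoneOn f (Set.Icc m n) :=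
  monotoneOn_of_le_succ Set.ordConnected_Icc fun i _ hi hi' ↦
    hf i hi.1 (Order.succ_le_iff.mp hi'.2)

lemma Finset.sum_mul_sum_le_sum_mul_sum_of_le_of_le {ι α : Type*} [CommSemiring α]
    [PartialOrder α] [IsOrderedRing α] {s t : Finset ι} {w f : ι → α} {c : α}
    (hws : ∀ i ∈ s, 0 ≤ w i) (hwt : ∀ i ∈ t, 0 ≤ w i)
    (hs : ∀ i ∈ s, f i ≤ c) (ht : ∀ i ∈ t, c ≤ f i) :
    (∑ i ∈ t, w i) * ∑ i ∈ s, w i * f i ≤ (∑ i ∈ s, w i) * ∑ i ∈ t, w i * f i := by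
  have hS : ∑ i ∈ s, w i * f i ≤ ∑ i ∈ s, w i * c :=
    sum_le_sum fun i hi ↦ mul_le_mul_of_nonneg_left (hs i hi) (hws i hi)
  have hT : ∑ i ∈ t, w i * c ≤ ∑ i ∈ t, w i * f i :=
    sum_le_sum fun i hi ↦ mul_le_mul_of_nonneg_left (ht i hi) (hwt i hi)
  calc (∑ i ∈ t, w i) * ∑ i ∈ s, w i * f i
      ≤ (∑ i ∈ t, w i) * ∑ i ∈ s, w i * c := mul_le_mul_of_nonneg_left hS (sum_nonneg hwt)
    _ = (∑ i ∈ s, w i) * ∑ i ∈ t, w i * c := by rw [← sum_mul, ← sum_mul]; ring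
    _ ≤ (∑ i ∈ s, w i) * ∑ i ∈ t, w i * f i := mul_le_mul_of_nonneg_left hT (sum_nonneg hws)

lemma div_add_mul_add_le_of_mul_le_mul {α : Type*} [Field α] [LinearOrder α]
    [IsStrictOrderedRing α] {a b x y : α} (ha : 0 ≤ a) (hb : 0 < b) (h : b * x ≤ a * y) :
    b / (a + b) * (x + y) ≤ y := by
  rw [div_mul_eq_mul_div, div_le_iff₀ (by positivity)]
  linarith

lemma Finset.sum_Icc_one_eq_sum_Icc_add_sum_Icc {M : Type*} [AddCommMonoid M] (f : ℕ → M)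
    {j k : ℕ} (hj : 1 ≤ j) (hjk : j ≤ k) :
    ∑ i ∈ Icc 1 k, f i = ∑ i ∈ Icc 1 (j - 1), f i + ∑ i ∈ Icc j k, f i := by
  rw [← sum_union]
  · congr 1
    ext i
    simp only [mem_union, mem_Icc]
    omega
  · exact disjoint_left.mpr fun i hi hi' ↦ by simp only [mem_Icc] at hi hi'; omega

theorem stmt_9_general (k : ℕ) (P : ℕ → ℝ)
    (hPmono : ∀ i, 1 ≤ i → i < k → P i ≤ P (i + 1)) :
    ∀ j, 1 ≤ j → j ≤ k →
      ((∑ i ∈ Finset.Icc 1 k, (1 : ℝ) / (i : ℝ)) -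
          ∑ i ∈ Finset.Icc 1 (j - 1), (1 : ℝ) / (i : ℝ)) /
          (∑ i ∈ Finset.Icc 1 k, (1 : ℝ) / (i : ℝ)) *
          (∑ i ∈ Finset.Icc 1 k, P i / (i : ℝ))
        ≤ ∑ i ∈ Finset.Icc j k, P i / (i : ℝ) := by
  intro j hj hjk
  have hmono := Nat.monotoneOn_Icc_of_le_succ hPmono
  have hweights : ∀ s : Finset ℕ, ∀ i ∈ s, (0 : ℝ) ≤ 1 / i := fun _ _ _ ↦ by positivity
  have hcross := sum_mul_sum_le_sum_mul_sum_of_le_of_le (c := P j)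
    (hweights (Icc 1 (j - 1))) (hweights (Icc j k))
    (fun i hi ↦ by simp only [mem_Icc] at hi; exact hmono ⟨hi.1, by omega⟩ ⟨hj, hjk⟩ (by omega))
    (fun i hi ↦ by simp only [mem_Icc] at hi; exact hmono ⟨hj, hjk⟩ ⟨by omega, hi.2⟩ hi.1)
  simp only [one_div_mul_eq_div] at hcross
  have htail_pos : 0 < ∑ i ∈ Icc j k, (1 : ℝ) / i :=
    sum_pos (fun i hi ↦ one_div_pos.mpr (Nat.cast_pos.mpr (by simp only [mem_Icc] at hi; omega)))
      ⟨j, mem_Icc.mpr ⟨le_rfl, hjk⟩⟩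
  rw [sum_Icc_one_eq_sum_Icc_add_sum_Icc _ hj hjk, sum_Icc_one_eq_sum_Icc_add_sum_Icc _ hj hjk,
    add_sub_cancel_left]
  exact div_add_mul_add_le_of_mul_le_mul (sum_nonneg (hweights _)) htail_pos hcross

/-- Let `k ≥ 1` and let `P 1 ≤ P 2 ≤ … ≤ P k` be nonnegative reals. Then for
every `1 ≤ j ≤ k`: `Σ_{i=j}^k P i / i ≥ ((H_k − H_{j−1})/H_k) · Σ_{i=1}^k P i / i`, where
`H_m = Σ_{i=1}^m 1/i` (and `H_0 = 0`). -/
theorem stmt_9 (k : ℕ) (hk : 1 ≤ k) (P : ℕ → ℝ)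
    (hP0 : ∀ i, 1 ≤ i → i ≤ k → 0 ≤ P i)
    (hPmono : ∀ i, 1 ≤ i → i < k → P i ≤ P (i + 1)) :
    ∀ j, 1 ≤ j → j ≤ k →
      ((∑ i ∈ Finset.Icc 1 k, (1 : ℝ) / (i : ℝ)) -
          ∑ i ∈ Finset.Icc 1 (j - 1), (1 : ℝ) / (i : ℝ)) /
          (∑ i ∈ Finset.Icc 1 k, (1 : ℝ) / (i : ℝ)) *
          (∑ i ∈ Finset.Icc 1 k, P i / (i : ℝ))
        ≤ ∑ i ∈ Finset.Icc j k, P i / (i : ℝ) :=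
  stmt_9_general k P hPmono
end

section
/- Let U and V be finite nonempty sets and let P : U × V → ℝ satisfy P(u,v) ≥ 0 for all u, v and Σ_{v∈V} P(u,v) = 1 for every u ∈ U. Define r̄(v) = Σ_{u∈U} P(u,v). Call a function f : U → V feasible if P(u, f(u)) > 0 for every u ∈ U, and for feasible f let r_f(v) = |{u ∈ U : f(u) = v}|. If f* is feasible and minimizes Σ_{v∈V} (r_f(v) − r̄(v))² over all feasible f, then for every v ∈ V, ⌊r̄(v)⌋ ≤ r_{f*}(v) ≤ ⌈r̄(v)⌉. -/
/-!
Write `dev f v = r_f(v) - r̄(v)` and let a tuple sitting in group `x` that may also take group `y`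
give a move `x → y`. Re-assigning one tuple per step along a path of moves from `x` to `w` keeps
the world feasible and shifts one unit of count from `x` to `w`, changing the cost by
`2 (dev w - dev x + 1)`; so at an optimum `dev x ≤ dev w + 1` whenever `w` is reachable from `x`.
The tuples assigned to a set of groups closed under moves put all their mass inside it, so its
total deviation is `≤ 0`; dually a set closed under reverse moves has total deviation `≥ 0`, as
all deviations sum to `0`. Hence a group with `dev ≥ 1` reaches one with `dev < 0`, and a group
with `dev ≤ -1` is reached from one with `dev > 0`, both impossible at an optimum. So
`|dev v| < 1`, which is the claim.
-/

open Finset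

theorem Relation.ReflTransGen.eq_or_exists_last_exit {α : Type*} {r : α → α → Prop} {a b : α}
    (h : ReflTransGen r a b) :
    a = b ∨ ∃ c, r a c ∧ ReflTransGen (fun x y => x ≠ a ∧ r x y) c b := by
  suffices ∀ x, ReflTransGen r x b → ReflTransGen (fun x y => x ≠ a ∧ r x y) x b ∨
      ∃ c, r a c ∧ ReflTransGen (fun x y => x ≠ a ∧ r x y) c b by
    rcases this a h with h' | h'
    · rcases h'.cases_head with rfl | ⟨c, ⟨hne, _⟩, _⟩
      · exact .inl rfl
      · exact absurd rfl hne
    · exact .inr h'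
  intro x hx
  induction hx using ReflTransGen.head_induction_on with
  | refl => exact .inl .refl
  | @head x c hxc _ ih =>
    rcases ih with ih | ih
    · by_cases hx : x = a
      · exact .inr ⟨c, hx ▸ hxc, ih⟩
      · exact .inl (.head ⟨hx, hxc⟩ ih)
    · exact .inr ih

theorem sum_sq_sub_single_add_single {ι : Type*} [Fintype ι] [DecidableEq ι] (a : ι → ℝ)
    {x w : ι} (hxw : x ≠ w) :
    ∑ i, (a i - (Pi.single x 1 : ι → ℝ) i + (Pi.single w 1 : ι → ℝ) i) ^ 2 =
      ∑ i, a i ^ 2 + 2 * (a w - a x + 1) := by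
  have hsplit : ∀ i, (a i - (Pi.single x 1 : ι → ℝ) i + (Pi.single w 1 : ι → ℝ) i) ^ 2 =
      a i ^ 2 + (Pi.single x (1 - 2 * a x) : ι → ℝ) i +
        (Pi.single w (1 + 2 * a w) : ι → ℝ) i := by
    intro i
    rcases eq_or_ne i x with rfl | hix
    · simp [hxw]; ring
    rcases eq_or_ne i w with rfl | hiw
    · simp [hix]; ring
    · simp [hix, hiw]
  simp only [hsplit, sum_add_distrib, Finset.sum_pi_single', mem_univ, if_true]
  ring

namespace GroupCount

variable {U V : Type*}

def fiberCard [Fintype U] [DecidableEq V] (f : U → V) (v : V) : ℕ := #{u | f u = v}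

def Feasible (P : U → V → ℝ) (f : U → V) : Prop := ∀ u, 0 < P u (f u)

def Moves (P : U → V → ℝ) (f : U → V) (x y : V) : Prop := ∃ u, f u = x ∧ 0 < P u y

def dev [Fintype U] [DecidableEq V] (P : U → V → ℝ) (f : U → V) (v : V) : ℝ :=
  fiberCard f v - ∑ u, P u v

theorem fiberCard_update_add [Fintype U] [DecidableEq U] [DecidableEq V] (f : U → V) (u : U)
    (y : V) :
    fiberCard (Function.update f u y) + Pi.single (f u) 1 = fiberCard f + Pi.single y 1 := by
  ext v
  simp only [fiberCard, Pi.add_apply, Pi.single_apply, card_filter,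
    ← Finset.add_sum_erase _ _ (mem_univ u), Function.update_self]
  rw [Finset.sum_congr rfl fun u' hu' => by rw [Function.update_of_ne (ne_of_mem_erase hu')]]
  split_ifs <;> grind

theorem Feasible.update [DecidableEq U] {P : U → V → ℝ} {f : U → V} (hf : Feasible P f) {u : U}
    {y : V} (hy : 0 < P u y) : Feasible P (Function.update f u y) := by
  intro u'
  rcases eq_or_ne u' u with rfl | hne
  · simpa using hy
  · simpa [Function.update_of_ne hne] using hf u'

theorem Moves.update [DecidableEq U] {P : U → V → ℝ} {f : U → V} {a b : V} (h : Moves P f a b)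
    {u : U} (ha : a ≠ f u) (y : V) : Moves P (Function.update f u y) a b := by
  obtain ⟨u', rfl, hu'⟩ := h
  have hne : u' ≠ u := by rintro rfl; exact ha rfl
  exact ⟨u', Function.update_of_ne hne .., hu'⟩

theorem Feasible.exists_shift [Fintype U] [Fintype V] [DecidableEq V] {P : U → V → ℝ}
    {f : U → V} (hf : Feasible P f) {x w : V} (hxw : Relation.ReflTransGen (Moves P f) x w) :
    ∃ g, Feasible P g ∧ fiberCard g + Pi.single x 1 = fiberCard f + Pi.single w 1 := by
  classical
  -- Induct on the set of groups a path may leave from. Cut the path where it leaves `x` for the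
  -- last time: after moving that step's tuple out of `x`, the rest of the path never needs it.
  suffices ∀ (S : Finset V) (f : U → V), Feasible P f → ∀ x w,
      Relation.ReflTransGen (fun a b => a ∈ S ∧ Moves P f a b) x w →
      ∃ g, Feasible P g ∧ fiberCard g + Pi.single x 1 = fiberCard f + Pi.single w 1 from
    this univ f hf x w (Relation.ReflTransGen.mono (fun a b h => ⟨mem_univ a, h⟩) _ _ hxw)
  intro S
  induction S using Finset.strongInduction with
  | H S ih =>
  intro f hf x w hxw
  rcases hxw.eq_or_exists_last_exit with rfl | ⟨y, ⟨hxS, u, rfl, hy⟩, hyw⟩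
  · exact ⟨f, hf, rfl⟩
  have hyw' : Relation.ReflTransGen
      (fun a b => a ∈ S.erase (f u) ∧ Moves P (Function.update f u y) a b) y w :=
    Relation.ReflTransGen.mono
      (fun a b ⟨hne, haS, hab⟩ => ⟨mem_erase.2 ⟨hne, haS⟩, hab.update hne y⟩) _ _ hyw
  obtain ⟨g, hg, hcount⟩ := ih _ (erase_ssubset hxS) _ (hf.update hy) y w hyw'
  refine ⟨g, hg, add_right_cancel (b := Pi.single y 1) ?_⟩
  rw [add_right_comm, hcount, add_assoc, add_comm (Pi.single w 1), ← add_assoc,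
    fiberCard_update_add, add_right_comm]

theorem dev_eq_of_fiberCard_add_single [Fintype U] [DecidableEq V] {P : U → V → ℝ}
    {f g : U → V} {x w : V} (h : fiberCard g + Pi.single x 1 = fiberCard f + Pi.single w 1) :
    dev P g = fun v => dev P f v - (Pi.single x 1 : V → ℝ) v + (Pi.single w 1 : V → ℝ) v := by
  funext v
  have hv := congrFun h v
  simp only [Pi.add_apply, Pi.single_apply] at hv ⊢
  simp only [dev]
  split_ifs at hv ⊢ <;> push_cast [← Nat.cast_inj (R := ℝ)] at hv <;> linarith

section Optimality

variable [Fintype U] [Fintype V] [DecidableEq V] {P : U → V → ℝ}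

theorem sum_dev_eq_zero (hP1 : ∀ u, ∑ v, P u v = 1) (f : U → V) :
    ∑ v, dev P f v = 0 := by
  have hcard : ∑ v, (fiberCard f v : ℝ) = Fintype.card U := by
    simpa [fiberCard] using
      congrArg (Nat.cast (R := ℝ)) (sum_card_fiberwise_eq_card_filter univ univ f)
  simp only [dev, sum_sub_distrib, hcard]
  rw [sum_comm]
  simp [hP1]

theorem sum_dev_nonpos_of_closed (hP0 : ∀ u v, 0 ≤ P u v) (hP1 : ∀ u, ∑ v, P u v = 1)
    {f : U → V} {T : Finset V} (hT : ∀ u y, f u ∈ T → 0 < P u y → y ∈ T) :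
    ∑ v ∈ T, dev P f v ≤ 0 := by
  have hmass : ∀ u, f u ∈ T → ∑ v ∈ T, P u v = 1 := fun u hu =>
    (hP1 u) ▸ sum_subset (subset_univ T) fun v _ hv =>
      ((hP0 u v).eq_or_lt.resolve_right fun h => hv (hT u v hu h)).symm
  have hcount : ∑ v ∈ T, (fiberCard f v : ℝ) = #{u | f u ∈ T} := by
    exact_mod_cast sum_card_fiberwise_eq_card_filter univ T f
  calc ∑ v ∈ T, dev P f v = #{u | f u ∈ T} - ∑ u, ∑ v ∈ T, P u v := by
        simp only [dev]
        rw [sum_sub_distrib, hcount, sum_comm]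
    _ ≤ ∑ u ∈ {u | f u ∈ T}, ∑ v ∈ T, P u v - ∑ u, ∑ v ∈ T, P u v := by
        rw [sum_congr rfl fun u hu => hmass u (mem_filter.1 hu).2]
        simp
    _ ≤ 0 := sub_nonpos.2 <| sum_le_sum_of_subset_of_nonneg (subset_univ _)
        fun u _ _ => sum_nonneg fun v _ => hP0 u v

theorem sum_dev_nonneg_of_coclosed (hP0 : ∀ u v, 0 ≤ P u v)
    (hP1 : ∀ u, ∑ v, P u v = 1) {f : U → V} {S : Finset V}
    (hS : ∀ u y, y ∈ S → 0 < P u y → f u ∈ S) :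
    0 ≤ ∑ v ∈ S, dev P f v := by
  have hcompl := sum_dev_nonpos_of_closed hP0 hP1 (T := Sᶜ) fun u y hu hy =>
    mem_compl.2 fun hyS => mem_compl.1 hu (hS u y hyS hy)
  linarith [sum_add_sum_compl S (dev P f), sum_dev_eq_zero hP1 f]

theorem exists_reachable_dev_neg (hP0 : ∀ u v, 0 ≤ P u v) (hP1 : ∀ u, ∑ v, P u v = 1)
    {f : U → V} {x : V} (hx : 0 < dev P f x) :
    ∃ w, Relation.ReflTransGen (Moves P f) x w ∧ dev P f w < 0 := by
  classical
  by_contra! h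
  set T : Finset V := {w | Relation.ReflTransGen (Moves P f) x w}
  have hT : ∀ u y, f u ∈ T → 0 < P u y → y ∈ T := fun u y hu hy =>
    mem_filter.2 ⟨mem_univ y, (mem_filter.1 hu).2.tail ⟨u, rfl, hy⟩⟩
  have hxT : x ∈ T := mem_filter.2 ⟨mem_univ x, .refl⟩
  have := single_le_sum (fun w hw => h w (mem_filter.1 hw).2) hxT
  linarith [sum_dev_nonpos_of_closed hP0 hP1 hT]

theorem exists_dev_pos_reaching (hP0 : ∀ u v, 0 ≤ P u v) (hP1 : ∀ u, ∑ v, P u v = 1)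
    {f : U → V} {x : V} (hx : dev P f x < 0) :
    ∃ w, Relation.ReflTransGen (Moves P f) w x ∧ 0 < dev P f w := by
  classical
  by_contra! h
  set S : Finset V := {w | Relation.ReflTransGen (Moves P f) w x}
  have hS : ∀ u y, y ∈ S → 0 < P u y → f u ∈ S := fun u y hy hu =>
    mem_filter.2 ⟨mem_univ _, (mem_filter.1 hy).2.head ⟨u, rfl, hu⟩⟩
  have hxS : x ∈ S := mem_filter.2 ⟨mem_univ x, .refl⟩
  have := single_le_sum (f := fun w => -dev P f w)
    (fun w hw => neg_nonneg.2 (h w (mem_filter.1 hw).2)) hxS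
  rw [sum_neg_distrib] at this
  linarith [sum_dev_nonneg_of_coclosed hP0 hP1 hS]

theorem dev_le_dev_add_one_of_reachable {f : U → V} (hf : Feasible P f)
    (hmin : ∀ g, Feasible P g → ∑ v, dev P f v ^ 2 ≤ ∑ v, dev P g v ^ 2) {x w : V}
    (hxw : Relation.ReflTransGen (Moves P f) x w) : dev P f x ≤ dev P f w + 1 := by
  by_contra! hlt
  have hne : x ≠ w := by rintro rfl; linarith
  obtain ⟨g, hg, hcount⟩ := hf.exists_shift hxw
  have := hmin g hg
  rw [dev_eq_of_fiberCard_add_single hcount, sum_sq_sub_single_add_single _ hne] at this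
  linarith

theorem abs_dev_lt_one (hP0 : ∀ u v, 0 ≤ P u v) (hP1 : ∀ u, ∑ v, P u v = 1)
    {f : U → V} (hf : Feasible P f)
    (hmin : ∀ g, Feasible P g → ∑ v, dev P f v ^ 2 ≤ ∑ v, dev P g v ^ 2) (v : V) :
    |dev P f v| < 1 := by
  rw [abs_lt]
  constructor
  · by_contra! hv
    obtain ⟨w, hwv, hw⟩ := exists_dev_pos_reaching hP0 hP1 (by linarith : dev P f v < 0)
    linarith [dev_le_dev_add_one_of_reachable hf hmin hwv]
  · by_contra! hv
    obtain ⟨w, hvw, hw⟩ := exists_reachable_dev_neg hP0 hP1 (by linarith : 0 < dev P f v)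
    linarith [dev_le_dev_add_one_of_reachable hf hmin hvw]

end Optimality

end GroupCount

theorem stmt_11_general {U V : Type*} [Fintype U] [Fintype V] [DecidableEq V]
    (P : U → V → ℝ) (hP0 : ∀ u v, 0 ≤ P u v) (hP1 : ∀ u, ∑ v : V, P u v = 1)
    (fstar : U → V) (hfeas : ∀ u, 0 < P u (fstar u))
    (hmin : ∀ f : U → V, (∀ u, 0 < P u (f u)) →
      (∑ v : V, (((Finset.univ.filter fun u => fstar u = v).card : ℝ) - ∑ u : U, P u v) ^ 2)
        ≤ ∑ v : V, (((Finset.univ.filter fun u => f u = v).card : ℝ) - ∑ u : U, P u v) ^ 2) :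
    ∀ v : V,
      ((⌊∑ u : U, P u v⌋ : ℝ) ≤ ((Finset.univ.filter fun u => fstar u = v).card : ℝ)) ∧
      (((Finset.univ.filter fun u => fstar u = v).card : ℝ) ≤ (⌈∑ u : U, P u v⌉ : ℝ)) := by
  intro v
  have hdev := abs_lt.1 (GroupCount.abs_dev_lt_one hP0 hP1 hfeas hmin v)
  simp only [GroupCount.dev, GroupCount.fiberCard] at hdev
  constructor
  · exact_mod_cast Int.floor_le_iff.2 (by push_cast; linarith)
  · exact_mod_cast Int.le_ceil_iff.2 (by push_cast; linarith)

/-- Let `U, V` be finite nonempty sets and `P : U × V → ℝ` nonnegative with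
rows summing to 1.  With `r̄(v) = Σ_u P(u,v)`, a function `f : U → V` feasible when
`P(u, f u) > 0` for all `u`, and `r_f(v) = |{u : f u = v}|`, if the feasible `f*` minimizes
`Σ_v (r_f(v) − r̄(v))²` over all feasible `f`, then `⌊r̄(v)⌋ ≤ r_{f*}(v) ≤ ⌈r̄(v)⌉`
for every `v`. -/
theorem stmt_11 {U V : Type*} [Fintype U] [Fintype V] [DecidableEq U] [DecidableEq V]
    [Nonempty U] [Nonempty V]
    (P : U → V → ℝ) (hP0 : ∀ u v, 0 ≤ P u v) (hP1 : ∀ u, ∑ v : V, P u v = 1)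
    (fstar : U → V) (hfeas : ∀ u, 0 < P u (fstar u))
    (hmin : ∀ f : U → V, (∀ u, 0 < P u (f u)) →
      (∑ v : V, (((Finset.univ.filter fun u => fstar u = v).card : ℝ) - ∑ u : U, P u v) ^ 2)
        ≤ ∑ v : V, (((Finset.univ.filter fun u => f u = v).card : ℝ) - ∑ u : U, P u v) ^ 2) :
    ∀ v : V,
      ((⌊∑ u : U, P u v⌋ : ℝ) ≤ ((Finset.univ.filter fun u => fstar u = v).card : ℝ)) ∧
      (((Finset.univ.filter fun u => fstar u = v).card : ℝ) ≤ (⌈∑ u : U, P u v⌉ : ℝ)) :=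
  stmt_11_general P hP0 hP1 fstar hfeas hmin
end

section
/- Let X be a random vector in ℝ^m taking only finitely many values, let S ⊆ ℝ^m be its support (the set of values attained with positive probability), and let x̄ = E[X]. Suppose x* ∈ S minimizes the squared Euclidean distance to x̄ over S, i.e., ‖x* − x̄‖² ≤ ‖s − x̄‖² for every s ∈ S. Then for every y ∈ S, E[‖x* − X‖²] ≤ 4 · E[‖y − X‖²]. In particular, the possible answer closest to the mean answer is a 4-approximation to the median answer, the element of S minimizing the expected squared distance to X. -/
open Finset

/-- Let `X` be a random vector in `ℝ^m` taking only finitely many values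
(modeled by weights `μ` on a finite sample space `Ω`), with support
`S = {v : ∃ ω, μ ω > 0 ∧ X ω = v}` and mean `x̄ i = Σ_ω μ ω · X ω i`.  If `x* ∈ S` minimizes
the squared Euclidean distance to `x̄` over `S`, then for every `y ∈ S`,
`E[‖x* − X‖²] ≤ 4 · E[‖y − X‖²]`; i.e. the possible answer closest to the mean answer is a
4-approximation to the median answer. -/
theorem stmt_12 {Ω : Type*} [Fintype Ω] (m : ℕ)
    (μ : Ω → ℝ) (hμ0 : ∀ ω, 0 ≤ μ ω) (hμ1 : ∑ ω : Ω, μ ω = 1)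
    (X : Ω → Fin m → ℝ)
    (xstar : Fin m → ℝ)
    (hxstar : xstar ∈ {v : Fin m → ℝ | ∃ ω, 0 < μ ω ∧ X ω = v})
    (hmin : ∀ s ∈ {v : Fin m → ℝ | ∃ ω, 0 < μ ω ∧ X ω = v},
      (∑ i : Fin m, (xstar i - ∑ ω : Ω, μ ω * X ω i) ^ 2)
        ≤ ∑ i : Fin m, (s i - ∑ ω : Ω, μ ω * X ω i) ^ 2) :
    ∀ y ∈ {v : Fin m → ℝ | ∃ ω, 0 < μ ω ∧ X ω = v},
      (∑ ω : Ω, μ ω * ∑ i : Fin m, (xstar i - X ω i) ^ 2)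
        ≤ 4 * ∑ ω : Ω, μ ω * ∑ i : Fin m, (y i - X ω i) ^ 2 := by
  intro y hy
  set xbar : Fin m → ℝ := fun i => ∑ ω : Ω, μ ω * X ω i with hxbar
  -- bias-variance decomposition
  have key : ∀ a : Fin m → ℝ,
      ∑ ω : Ω, μ ω * ∑ i : Fin m, (a i - X ω i) ^ 2
        = (∑ i : Fin m, (a i - xbar i) ^ 2)
          + ∑ ω : Ω, μ ω * ∑ i : Fin m, (xbar i - X ω i) ^ 2 := by
    intro a
    have L : ∀ b : Fin m → ℝ,
        ∑ ω : Ω, μ ω * ∑ i : Fin m, (b i - X ω i) ^ 2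
          = ∑ i : Fin m, ∑ ω : Ω, μ ω * (b i - X ω i) ^ 2 := by
      intro b
      rw [Finset.sum_comm]
      simp [Finset.mul_sum]
    rw [L, L, ← Finset.sum_add_distrib]
    refine Finset.sum_congr rfl fun i _ => ?_
    have expand : ∀ ω : Ω, μ ω * (a i - X ω i) ^ 2
        = (a i - xbar i) ^ 2 * μ ω
          + 2 * (a i - xbar i) * (xbar i * μ ω - μ ω * X ω i)
          + μ ω * (xbar i - X ω i) ^ 2 := by
      intro ω; ring
    calc ∑ ω : Ω, μ ω * (a i - X ω i) ^ 2
        = ∑ ω : Ω, ((a i - xbar i) ^ 2 * μ ω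
            + 2 * (a i - xbar i) * (xbar i * μ ω - μ ω * X ω i)
            + μ ω * (xbar i - X ω i) ^ 2) := Finset.sum_congr rfl fun ω _ => expand ω
      _ = (a i - xbar i) ^ 2 * (∑ ω : Ω, μ ω)
            + 2 * (a i - xbar i) * (xbar i * (∑ ω : Ω, μ ω) - ∑ ω : Ω, μ ω * X ω i)
            + ∑ ω : Ω, μ ω * (xbar i - X ω i) ^ 2 := by
          rw [Finset.sum_add_distrib, Finset.sum_add_distrib, ← Finset.mul_sum,
            ← Finset.mul_sum, Finset.sum_sub_distrib, ← Finset.mul_sum]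
      _ = (a i - xbar i) ^ 2 + ∑ ω : Ω, μ ω * (xbar i - X ω i) ^ 2 := by
          rw [hμ1]; simp [hxbar]
  have hbias : (∑ i : Fin m, (xstar i - xbar i) ^ 2) ≤ ∑ i : Fin m, (y i - xbar i) ^ 2 :=
    hmin y hy
  have h1 : (∑ ω : Ω, μ ω * ∑ i : Fin m, (xstar i - X ω i) ^ 2)
      ≤ ∑ ω : Ω, μ ω * ∑ i : Fin m, (y i - X ω i) ^ 2 := by
    rw [key xstar, key y]; linarith
  have hnonneg : 0 ≤ ∑ ω : Ω, μ ω * ∑ i : Fin m, (y i - X ω i) ^ 2 := by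
    refine Finset.sum_nonneg fun ω _ => mul_nonneg (hμ0 ω) ?_
    exact Finset.sum_nonneg fun i _ => sq_nonneg _
  linarith
end
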